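/- arXiv:math/0312004 — 4 statements merged into one kernel-verified Lean document; each statement's English description precedes it below -/
import Mathlib

section
/- Let p ≥ 2 be an integer and k an integer not divisible by p. Then ∑_{l=0}^{p−1} l · sin((2l+1)πk/p) = −(p/2) · (1/sin(πk/p)), i.e. equals −(p/2)·cosec(πk/p). -/
/-!
With `θ = πk/p`, product-to-sum gives `2 sin θ · sin((2l+1)θ) = cos(2lθ) - cos(2(l+1)θ)`, so summation
by parts turns `2 sin θ · ∑ l sin((2l+1)θ)` into `∑_{l<p} cos(2(l+1)θ) - p cos(2pθ)`. Since `pθ = kπ`,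
`cos(2pθ) = 1`, and the cosine sum vanishes because it telescopes in the same way to
`(sin((2p+1)θ) - sin θ) / (2 sin θ) = 0`.
-/

open Finset Real

theorem Finset.sum_range_natCast_mul_sub_succ {R : Type*} [CommRing R] (f : ℕ → R) (n : ℕ) :
    ∑ l ∈ range n, (l : R) * (f l - f (l + 1)) = ∑ l ∈ range n, f (l + 1) - n * f n := by
  induction n with
  | zero => simp
  | succ n ih =>
    rw [sum_range_succ, ih, sum_range_succ]
    push_cast
    ring

namespace Real

theorem two_mul_sin_mul_sin_odd_mul (θ x : ℝ) :
    2 * sin θ * sin ((2 * x + 1) * θ) = cos (2 * x * θ) - cos (2 * (x + 1) * θ) := by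
  rw [cos_sub_cos, show (2 * x * θ - 2 * (x + 1) * θ) / 2 = -θ by ring, sin_neg]
  ring_nf

theorem two_mul_sin_mul_cos_even_mul (θ x : ℝ) :
    2 * sin θ * cos (2 * (x + 1) * θ) = sin ((2 * (x + 1) + 1) * θ) - sin ((2 * x + 1) * θ) := by
  rw [sin_sub_sin, show ((2 * (x + 1) + 1) * θ - (2 * x + 1) * θ) / 2 = θ by ring]
  ring_nf

theorem two_mul_sin_mul_sum_cos_even_mul (θ : ℝ) (n : ℕ) :
    2 * sin θ * ∑ l ∈ range n, cos (2 * ((l : ℝ) + 1) * θ) = sin ((2 * n + 1) * θ) - sin θ := by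
  rw [mul_sum]
  simp_rw [two_mul_sin_mul_cos_even_mul]
  convert sum_range_sub (fun l : ℕ ↦ sin ((2 * (l : ℝ) + 1) * θ)) n using 1
  · push_cast
    rfl
  · simp

theorem two_mul_sin_mul_sum_mul_sin_odd_mul (θ : ℝ) (n : ℕ) :
    2 * sin θ * ∑ l ∈ range n, (l : ℝ) * sin ((2 * l + 1) * θ)
      = ∑ l ∈ range n, cos (2 * ((l : ℝ) + 1) * θ) - n * cos (2 * n * θ) := by
  rw [mul_sum]
  calc ∑ l ∈ range n, 2 * sin θ * ((l : ℝ) * sin ((2 * l + 1) * θ))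
      = ∑ l ∈ range n, (l : ℝ) * (cos (2 * (l : ℝ) * θ) - cos (2 * ((l + 1 : ℕ) : ℝ) * θ)) := by
        refine sum_congr rfl fun l _ ↦ ?_
        rw [mul_left_comm, two_mul_sin_mul_sin_odd_mul]
        push_cast
        rfl
    _ = _ := by
        rw [sum_range_natCast_mul_sub_succ (fun l : ℕ ↦ cos (2 * (l : ℝ) * θ))]
        push_cast
        rfl

theorem sum_mul_sin_odd_mul_eq_of_nat_mul_eq_int_mul_pi {θ : ℝ} (hθ : sin θ ≠ 0) {n : ℕ} {k : ℤ}
    (hnk : n * θ = k * π) :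
    ∑ l ∈ range n, (l : ℝ) * sin ((2 * l + 1) * θ) = -((n : ℝ) / 2) * (1 / sin θ) := by
  have hcos : cos (2 * n * θ) = 1 := by
    rw [mul_assoc, hnk, ← mul_assoc, mul_comm 2, mul_assoc]
    exact cos_int_mul_two_pi k
  have hsin : sin ((2 * n + 1) * θ) = sin θ := by
    rw [add_mul, one_mul, mul_assoc, hnk, ← mul_assoc, mul_comm 2, mul_assoc, add_comm]
    exact sin_add_int_mul_two_pi θ k
  have hsum : ∑ l ∈ range n, cos (2 * ((l : ℝ) + 1) * θ) = 0 := by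
    have := two_mul_sin_mul_sum_cos_even_mul θ n
    rw [hsin, sub_self] at this
    simpa [hθ] using this
  have key := two_mul_sin_mul_sum_mul_sin_odd_mul θ n
  rw [hsum, hcos] at key
  rw [show -((n : ℝ) / 2) * (1 / sin θ) = -n / (2 * sin θ) by ring,
    eq_div_iff (mul_ne_zero two_ne_zero hθ)]
  linarith

theorem sin_pi_mul_intCast_div_natCast_ne_zero {p : ℕ} (hp : p ≠ 0) {k : ℤ}
    (hk : ¬ (p : ℤ) ∣ k) : sin (π * k / p) ≠ 0 := by
  rw [Ne, sin_eq_zero_iff]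
  rintro ⟨n, hn⟩
  refine hk ⟨n, ?_⟩
  have : (k : ℝ) = p * n := by
    field_simp at hn
    linarith [pi_pos]
  exact_mod_cast this

end Real

/-- For an integer `p ≥ 2` and an integer `k` not divisible by `p`,
`∑_{l=0}^{p−1} l · sin((2l+1)πk/p) = −(p/2) · cosec(πk/p)`. -/
theorem sum_mul_sin_odd_eq_neg_half_mul_cosec (p : ℕ) (hp : 2 ≤ p) (k : ℤ)
    (hk : ¬ ((p : ℤ) ∣ k)) :
    ∑ l ∈ Finset.range p, (l : ℝ) * Real.sin ((2 * l + 1) * Real.pi * k / p)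
      = -((p : ℝ) / 2) * (1 / Real.sin (Real.pi * k / p)) := by
  have hp0 : p ≠ 0 := by omega
  have hpk : (p : ℝ) * (π * k / p) = k * π := by field_simp
  rw [← sum_mul_sin_odd_mul_eq_of_nat_mul_eq_int_mul_pi
    (sin_pi_mul_intCast_div_natCast_ne_zero hp0 hk) hpk]
  refine sum_congr rfl fun l _ ↦ ?_
  ring_nf
end

section
/- Let p ≥ 3 be an odd integer and k an integer coprime to p. Set s_p(k) = ∑_{j=1}^{(p−1)/2} ⌊jk/p⌋. Then ∏_{j=1}^{(p−1)/2} sin(πjk/p) = (−1)^{s_p(k)} · ∏_{j=1}^{(p−1)/2} sin(πj/p). -/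
private lemma zpow_sum_neg_one {s : Finset ℕ} (f : ℕ → ℤ) :
    ((-1 : ℝ) ^ (∑ j ∈ s, f j)) = ∏ j ∈ s, (-1 : ℝ) ^ (f j) := by
  classical
  induction s using Finset.induction with
  | empty => simp
  | insert a s h ih =>
      rw [Finset.sum_insert h, Finset.prod_insert h, zpow_add₀ (by norm_num), ih]

private lemma floor_real_div (a : ℤ) (b : ℕ) : ⌊((a : ℝ)) / b⌋ = a / b := by
  have : ((a : ℝ)) / b = (((a : ℚ) / b : ℚ) : ℝ) := by push_cast; ring
  rw [this, Rat.floor_cast, Rat.floor_intCast_div_natCast]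

private lemma sin_pi_int_add (q : ℤ) (x : ℝ) :
    Real.sin (q * Real.pi + x) = (-1 : ℝ) ^ q * Real.sin x := by
  rw [Real.sin_add, Real.sin_int_mul_pi, zero_mul, zero_add]
  have := Real.cos_int_mul_pi_sub 0 q
  simp only [sub_zero, Real.cos_zero, mul_one] at this
  rw [this]

/-- For an odd integer `p ≥ 3` and an integer `k` coprime to `p`, with
`s_p(k) = ∑_{j=1}^{(p−1)/2} ⌊jk/p⌋`, one has
`∏_{j=1}^{(p−1)/2} sin(πjk/p) = (−1)^{s_p(k)} · ∏_{j=1}^{(p−1)/2} sin(πj/p)`. -/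
theorem prod_sin_mul_eq_sign_mul_prod_sin (p : ℕ) (hp : 3 ≤ p) (hodd : Odd p)
    (k : ℤ) (hk : IsCoprime k (p : ℤ)) :
    ∏ j ∈ Finset.Icc 1 ((p - 1) / 2), Real.sin (Real.pi * j * k / p)
      = (-1 : ℝ) ^ (∑ j ∈ Finset.Icc 1 ((p - 1) / 2), ⌊((j : ℝ) * k) / p⌋) *
          ∏ j ∈ Finset.Icc 1 ((p - 1) / 2), Real.sin (Real.pi * j / p) := by
  classical
  obtain ⟨m, hm⟩ := hodd
  have hm1 : 1 ≤ m := by omega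
  have hmeq : (p - 1) / 2 = m := by omega
  rw [hmeq]
  have hp0 : (0:ℝ) < (p:ℝ) := by positivity
  have hpne : (p:ℝ) ≠ 0 := hp0.ne'
  have hpz : (0:ℤ) < (p:ℤ) := by exact_mod_cast (by omega : 0 < p)
  -- residues
  set R : ℕ → ℤ := fun j => ((j : ℤ) * k) % p with hR
  have hR0 : ∀ j, 0 ≤ R j := fun j => Int.emod_nonneg _ (by omega)
  have hRlt : ∀ j, R j < p := fun j => Int.emod_lt_of_pos _ hpz
  have hRd : ∀ j : ℕ, (p:ℤ) ∣ (j:ℤ) * k - R j := fun j =>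
    Int.dvd_self_sub_of_emod_eq rfl
  have hRne : ∀ j, 1 ≤ j → j ≤ m → R j ≠ 0 := by
    intro j hj1 hj2 h0
    have hd : (p:ℤ) ∣ (j:ℤ) * k := Int.dvd_of_emod_eq_zero h0
    have hd2 : (p:ℤ) ∣ (j:ℤ) := (hk.symm).dvd_of_dvd_mul_right hd
    have := Int.le_of_dvd (by exact_mod_cast (by omega : 0 < j)) hd2
    omega
  -- step 1: per-term factorization
  have step1 : ∀ j ∈ Finset.Icc 1 m,
      Real.sin (Real.pi * j * k / p)
        = (-1 : ℝ) ^ (⌊((j : ℝ) * k) / p⌋) * Real.sin (Real.pi * (R j) / p) := by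
    intro j hj
    have hfl : ⌊((j : ℝ) * k) / p⌋ = ((j:ℤ) * k) / p := by
      have : ((j : ℝ) * k) = (((j:ℤ) * k : ℤ) : ℝ) := by push_cast; ring
      rw [this, floor_real_div]
    have hdiv : ((j:ℤ)*k) = p * (((j:ℤ)*k)/p) + R j := (Int.mul_ediv_add_emod _ _).symm
    have hdivR : ((j:ℝ)*k) = (p:ℝ) * ((((j:ℤ)*k)/p : ℤ) : ℝ) + ((R j : ℤ) : ℝ) := by
      exact_mod_cast congrArg (fun z : ℤ => (z : ℝ)) hdiv
    have hxx : Real.pi * j * k / p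
        = (((j:ℤ)*k)/p : ℤ) * Real.pi + Real.pi * (R j) / p := by
      field_simp
      linear_combination hdivR
    rw [hxx, sin_pi_int_add, hfl]
  rw [Finset.prod_congr rfl step1, Finset.prod_mul_distrib, ← zpow_sum_neg_one]
  congr 1
  -- step 2: the folded residue map
  set g : ℕ → ℕ := fun j => min (R j).toNat (p - (R j).toNat) with hg
  have hmem : ∀ j ∈ Finset.Icc 1 m, g j ∈ Finset.Icc 1 m := by
    intro j hj
    simp only [Finset.mem_Icc] at hj
    have h1 := hR0 j; have h2 := hRlt j; have h3 := hRne j hj.1 hj.2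
    simp only [Finset.mem_Icc, hg]
    omega
  have hinj : ∀ j₁ ∈ Finset.Icc 1 m, ∀ j₂ ∈ Finset.Icc 1 m, g j₁ = g j₂ → j₁ = j₂ := by
    intro j₁ hj₁ j₂ hj₂ heq
    simp only [Finset.mem_Icc] at hj₁ hj₂
    have h10 := hR0 j₁; have h1l := hRlt j₁; have h1n := hRne j₁ hj₁.1 hj₁.2
    have h20 := hR0 j₂; have h2l := hRlt j₂; have h2n := hRne j₂ hj₂.1 hj₂.2
    simp only [hg] at heq
    have hcases : R j₁ = R j₂ ∨ R j₁ + R j₂ = p := by omega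
    rcases hcases with h | h
    · have hd : (p:ℤ) ∣ ((j₁:ℤ) - j₂) * k := by
        have h' := dvd_sub (hRd j₁) (hRd j₂)
        have e : ((j₁:ℤ)*k - R j₁) - ((j₂:ℤ)*k - R j₂) = ((j₁:ℤ) - j₂) * k := by
          rw [h]; ring
        rwa [e] at h'
      have hd2 : (p:ℤ) ∣ ((j₁:ℤ) - j₂) := (hk.symm).dvd_of_dvd_mul_right hd
      have : ((j₁:ℤ) - j₂) = 0 := by
        refine Int.eq_zero_of_abs_lt_dvd hd2 ?_
        rw [abs_lt]
        constructor <;> · omega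
      omega
    · have hd : (p:ℤ) ∣ ((j₁:ℤ) + j₂) * k := by
        have e : ((j₁:ℤ) + j₂) * k = ((j₁:ℤ)*k - R j₁) + ((j₂:ℤ)*k - R j₂) + (R j₁ + R j₂) := by
          ring
        rw [e, h]
        exact dvd_add (dvd_add (hRd j₁) (hRd j₂)) dvd_rfl
      have hd2 : (p:ℤ) ∣ ((j₁:ℤ) + j₂) := (hk.symm).dvd_of_dvd_mul_right hd
      have := Int.le_of_dvd (by omega) hd2
      push_cast at this
      omega
  have hsurj := Finset.surj_on_of_inj_on_of_card_le (s := Finset.Icc 1 m)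
      (t := Finset.Icc 1 m) (fun j _ => g j) (fun a ha => hmem a ha)
      (fun a₁ a₂ ha₁ ha₂ h => hinj a₁ ha₁ a₂ ha₂ h) le_rfl
  refine Finset.prod_bij (fun j _ => g j) hmem
      (fun a₁ ha₁ a₂ ha₂ h => hinj a₁ ha₁ a₂ ha₂ h)
      (fun b hb => by obtain ⟨a, ha, hab⟩ := hsurj b hb; exact ⟨a, ha, hab.symm⟩) ?_
  -- value equality
  intro j hj
  simp only [Finset.mem_Icc] at hj
  have h1 := hR0 j; have h2 := hRlt j; have h3 := hRne j hj.1 hj.2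
  simp only [hg]
  rcases le_or_gt (R j).toNat (p - (R j).toNat) with hle | hlt
  · rw [min_eq_left hle]
    have hc : (((R j).toNat : ℕ) : ℝ) = ((R j : ℤ) : ℝ) := by
      exact_mod_cast congrArg (fun z : ℤ => (z : ℝ)) (Int.toNat_of_nonneg h1)
    rw [hc]
  · rw [min_eq_right hlt.le]
    have hn : (R j).toNat ≤ p := by omega
    have hc : ((p - (R j).toNat : ℕ) : ℝ) = (p:ℝ) - (R j : ℝ) := by
      have h' : (((p - (R j).toNat : ℕ) : ℤ) : ℝ) = ((p : ℤ) : ℝ) - ((R j : ℤ) : ℝ) := by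
        have : ((p - (R j).toNat : ℕ) : ℤ) = (p : ℤ) - R j := by
          omega
        rw [this]; push_cast; ring
      exact_mod_cast h'
    rw [hc]
    have : Real.pi * ((p:ℝ) - (R j : ℝ)) / p = Real.pi - Real.pi * (R j) / p := by
      field_simp
    rw [this, Real.sin_pi_sub]
end

section
/- Let p be an odd prime and k an integer with 1 ≤ k ≤ p−1. Then ∏_{j=1}^{(p−1)/2} sin(πjk/p) = (−1)^{(k−1)(p²−1)/8} · (k/p) · √p / 2^{(p−1)/2}, where (k/p) denotes the Legendre symbol and (k−1)(p²−1)/8 is an integer since p² ≡ 1 (mod 8). -/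
open Finset Real


lemma abs_one_sub_exp (θ : ℝ) : ‖(1 - Complex.exp (θ * Complex.I))‖ = 2 * |Real.sin (θ/2)| := by
  have h : (1 : ℂ) - Complex.exp (θ * Complex.I)
      = Complex.exp ((θ/2 : ℝ) * Complex.I) * (-2 * Complex.I * Complex.sin ((θ/2 : ℝ) : ℂ)) := by
    have hsin : -2 * Complex.I * Complex.sin ((θ/2 : ℝ) : ℂ)
        = Complex.exp (-((θ/2:ℝ):ℂ) * Complex.I) - Complex.exp (((θ/2:ℝ):ℂ) * Complex.I) := by
      rw [Complex.sin]; ring_nf; rw [Complex.I_sq]; ring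
    rw [hsin, mul_sub, ← Complex.exp_add, ← Complex.exp_add]
    norm_num
    congr 1
    push_cast
    ring
  rw [h, norm_mul, Complex.norm_exp_ofReal_mul_I, one_mul, ← Complex.ofReal_sin]
  rw [show (-2 : ℂ) * Complex.I * ((Real.sin (θ/2) : ℝ) : ℂ) = ((-2 * Real.sin (θ/2) : ℝ)) * Complex.I by push_cast; ring]
  rw [norm_mul, Complex.norm_I, Complex.norm_real, Real.norm_eq_abs, mul_one, abs_mul]
  norm_num
lemma prod_two_sin (p : ℕ) [hp : Fact p.Prime] (hp2 : p ≠ 2) :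
    ∏ j ∈ Finset.Ico 1 p, (2 * Real.sin (π * j / p)) = p := by
  have hp0 : (p : ℝ) ≠ 0 := Nat.cast_ne_zero.mpr hp.out.ne_zero
  have hζ : IsPrimitiveRoot (Complex.exp (2 * π * Complex.I / p)) p :=
    Complex.isPrimitiveRoot_exp p hp.out.ne_zero
  have hpe : p - 1 + 1 = p := Nat.succ_pred_eq_of_pos hp.out.pos
  have hprod : ∏ j ∈ range (p-1), (1 - Complex.exp (2 * π * Complex.I / p) ^ (j+1)) = ((p:ℂ)) := by
    have := IsPrimitiveRoot.prod_one_sub_pow_eq_order (n := p - 1)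
      (μ := Complex.exp (2 * π * Complex.I / p)) (by rwa [hpe])
    rw [this]
    push_cast [hpe]
    rw [Nat.cast_sub hp.out.one_le]
    push_cast; ring
  have habs : ∏ j ∈ range (p-1), ‖(1 - Complex.exp (2 * π * Complex.I / p) ^ (j+1))‖ = p := by
    rw [← norm_prod, hprod, Complex.norm_natCast]
  have hterm : ∀ j ∈ range (p-1), ‖(1 - Complex.exp (2 * π * Complex.I / p) ^ (j+1))‖
      = 2 * Real.sin (π * (j+1) / p) := by
    intro j hj
    rw [← Complex.exp_nat_mul]
    rw [show ((j+1 : ℕ):ℂ) * (2 * π * Complex.I / p) = ((2 * π * (j+1) / p : ℝ) : ℂ) * Complex.I by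
      push_cast; field_simp]
    rw [abs_one_sub_exp]
    have hj' : j + 1 < p := by have := Finset.mem_range.mp hj; omega
    have h1 : 0 < π * (j+1) / p := by positivity
    have h2 : π * (j+1) / p < π := by
      rw [div_lt_iff₀ (by positivity)]
      have : ((j:ℝ)+1) < p := by exact_mod_cast hj'
      nlinarith [Real.pi_pos]
    rw [show 2 * π * ((j:ℝ)+1) / p / 2 = π * (j+1) / p by ring,
      abs_of_pos (Real.sin_pos_of_pos_of_lt_pi h1 h2)]
  rw [Finset.prod_congr rfl hterm] at habs
  rw [Finset.prod_Ico_eq_prod_range]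
  refine Eq.trans ?_ habs
  exact Finset.prod_congr rfl (fun j _ => by push_cast; ring_nf)
lemma base_prod (p : ℕ) [hp : Fact p.Prime] (hp2 : p ≠ 2) :
    ∏ j ∈ Finset.Ico 1 (p/2+1), Real.sin (π * j / p) = Real.sqrt p / 2 ^ (p/2) := by
  have hodd : p % 2 = 1 := Nat.odd_iff.mp (hp.out.odd_of_ne_two hp2)
  have hp5 : 3 ≤ p := by have := hp.out.two_le; omega
  have hp0 : (0:ℝ) < p := by positivity
  set n := p / 2 with hn
  have hsplit : (∏ j ∈ Finset.Ico 1 (n+1), (2 * Real.sin (π * j / p))) *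
      (∏ j ∈ Finset.Ico (n+1) p, (2 * Real.sin (π * j / p))) = p := by
    rw [Finset.prod_Ico_consecutive _ (by omega) (by omega)]
    exact prod_two_sin p hp2
  have hrefl : ∏ j ∈ Finset.Ico (n+1) p, (2 * Real.sin (π * j / p))
      = ∏ j ∈ Finset.Ico 1 (n+1), (2 * Real.sin (π * j / p)) := by
    refine Finset.prod_nbij' (fun j => p - j) (fun j => p - j) ?_ ?_ ?_ ?_ ?_
    · intro a ha; simp only [Finset.mem_Ico] at *; omega
    · intro a ha; simp only [Finset.mem_Ico] at *; omega
    · intro a ha; simp only [Finset.mem_Ico] at ha; omega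
    · intro a ha; simp only [Finset.mem_Ico] at ha; omega
    · intro a ha
      simp only [Finset.mem_Ico] at ha
      have hc : ((p - a : ℕ) : ℝ) = p - a := by
        rw [Nat.cast_sub (by omega)]
      rw [hc, show π * ((p:ℝ) - a) / p = π - π * a / p by field_simp, Real.sin_pi_sub]
  set A := ∏ j ∈ Finset.Ico 1 (n+1), (2 * Real.sin (π * j / p)) with hA
  have hA0 : 0 ≤ A := by
    apply Finset.prod_nonneg
    intro j hj
    simp only [Finset.mem_Ico] at hj
    have : 0 ≤ Real.sin (π * j / p) := by
      apply Real.sin_nonneg_of_nonneg_of_le_pi (by positivity)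
      rw [div_le_iff₀ hp0]
      have : (j:ℝ) ≤ p := by exact_mod_cast (by omega : j ≤ p)
      nlinarith [Real.pi_pos]
    linarith
  have hA2 : A * A = p := by rw [hrefl] at hsplit; exact hsplit
  have hsq : Real.sqrt p = A := by
    rw [← hA2]; exact Real.sqrt_mul_self hA0
  have hAsin : A = 2^n * ∏ j ∈ Finset.Ico 1 (n+1), Real.sin (π * j / p) := by
    rw [hA, Finset.prod_mul_distrib, Finset.prod_const, Nat.card_Ico]
    norm_num
  rw [hsq, hAsin]
  field_simp
lemma term_eq (p : ℕ) [hp : Fact p.Prime] (hp2 : p ≠ 2) (k : ℕ) (hk1 : 1 ≤ k) (hk : k ≤ p - 1)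
    (x : ℕ) (hx1 : 1 ≤ x) (hx2 : x ≤ p / 2) :
    Real.sin (π * x * k / p)
      = (-1:ℝ)^(k*x/p) * Real.sin (π * (((k : ZMod p) * x).valMinAbs.natAbs) / p) := by
  have hp3 : 3 ≤ p := by have := hp.out.two_le; rcases Nat.lt_or_ge p 3 with h | h; · interval_cases p <;> simp_all
                         · exact h
  have hp0 : (0:ℝ) < p := by positivity
  have hval : ((k : ZMod p) * x).val = (k * x) % p := by
    rw [show ((k : ZMod p) * x) = ((k * x : ℕ) : ZMod p) by push_cast; ring, ZMod.val_natCast]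
  have hndvd : ¬ p ∣ k * x := by
    rintro hdvd
    rcases (Nat.Prime.dvd_mul hp.out).mp hdvd with h | h
    · exact absurd (Nat.le_of_dvd (by omega) h) (by omega)
    · exact absurd (Nat.le_of_dvd (by omega) h) (by omega)
  have hr0 : (k * x) % p ≠ 0 := fun h => hndvd (Nat.dvd_of_mod_eq_zero h)
  have hrlt : (k * x) % p < p := Nat.mod_lt _ (by omega)
  set q := k * x / p with hq
  set r := (k * x) % p with hr
  have heq : k * x = p * q + r := (Nat.div_add_mod (k*x) p).symm
  have hangle : π * x * k / p = π * r / p + q * π := by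
    have : ((k:ℝ) * x) = p * q + r := by exact_mod_cast congrArg (Nat.cast : ℕ → ℝ) heq
    field_simp
    linear_combination this
  rw [hangle, Real.sin_add_nat_mul_pi]
  congr 1
  have hmin : ((k : ZMod p) * x).valMinAbs = if r ≤ p / 2 then (r:ℤ) else (r:ℤ) - p := by
    rw [ZMod.valMinAbs_def_pos, hval]
  rcases le_or_gt r (p/2) with hsmall | hbig
  · rw [hmin, if_pos hsmall]
    simp
  · rw [hmin, if_neg (not_le.mpr hbig)]
    have hna : ((r:ℤ) - p).natAbs = p - r := by omega
    rw [hna]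
    have hc : ((p - r : ℕ) : ℝ) = p - r := by rw [Nat.cast_sub (by omega)]
    rw [hc, show π * ((p:ℝ) - r) / p = π - π * r / p by field_simp, Real.sin_pi_sub]
lemma natAbs_valMinAbs_eq (p : ℕ) [hp : Fact p.Prime] (a : ZMod p) :
    a.valMinAbs.natAbs = if a.val ≤ p / 2 then a.val else p - a.val := by
  have hvlt : a.val < p := ZMod.val_lt a
  rw [ZMod.valMinAbs_def_pos]
  split_ifs with h <;> omega

lemma perm_prod (p : ℕ) [hp : Fact p.Prime] (k : ℕ) (hk1 : 1 ≤ k) (hk : k ≤ p - 1)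
    (f : ℕ → ℝ) :
    ∏ x ∈ Finset.Ico 1 (p/2+1), f (((k : ZMod p) * x).valMinAbs.natAbs)
      = ∏ x ∈ Finset.Ico 1 (p/2+1), f x := by
  have hp3 := hp.out.two_le
  have ha : (k : ZMod p) ≠ 0 := by
    rw [Ne, ZMod.natCast_eq_zero_iff]
    intro h
    exact absurd (Nat.le_of_dvd (by omega) h) (by omega)
  have hmap := ZMod.Ico_map_valMinAbs_natAbs_eq_Ico_map_id p (k : ZMod p) ha
  calc ∏ x ∈ Finset.Ico 1 (p/2+1), f (((k : ZMod p) * x).valMinAbs.natAbs)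
      = (((Finset.Ico 1 (p/2+1)).1.map (fun x : ℕ => ((k : ZMod p) * x).valMinAbs.natAbs)).map f).prod := by
        rw [Multiset.map_map]; rfl
    _ = (((Finset.Ico 1 (p/2+1)).1.map (fun a : ℕ => a)).map f).prod := by rw [hmap]
    _ = ∏ x ∈ Finset.Ico 1 (p/2+1), f x := by rw [Multiset.map_map]; rfl

lemma perm_sum (p : ℕ) [hp : Fact p.Prime] (k : ℕ) (hk1 : 1 ≤ k) (hk : k ≤ p - 1) :
    ∑ x ∈ Finset.Ico 1 (p/2+1), (((k : ZMod p) * x).valMinAbs.natAbs)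
      = ∑ x ∈ Finset.Ico 1 (p/2+1), x := by
  have hp3 := hp.out.two_le
  have ha : (k : ZMod p) ≠ 0 := by
    rw [Ne, ZMod.natCast_eq_zero_iff]
    intro h
    exact absurd (Nat.le_of_dvd (by omega) h) (by omega)
  have hmap := ZMod.Ico_map_valMinAbs_natAbs_eq_Ico_map_id p (k : ZMod p) ha
  calc ∑ x ∈ Finset.Ico 1 (p/2+1), (((k : ZMod p) * x).valMinAbs.natAbs)
      = ((Finset.Ico 1 (p/2+1)).1.map (fun x : ℕ => ((k : ZMod p) * x).valMinAbs.natAbs)).sum := rfl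
    _ = ((Finset.Ico 1 (p/2+1)).1.map (fun a : ℕ => a)).sum := by rw [hmap]
    _ = ∑ x ∈ Finset.Ico 1 (p/2+1), x := rfl
lemma sign_eq (p : ℕ) [hp : Fact p.Prime] (hp2 : p ≠ 2) (k : ℕ) (hk1 : 1 ≤ k) (hk : k ≤ p - 1) :
    (-1:ℝ) ^ (∑ x ∈ Finset.Ico 1 (p/2+1), k * x / p)
      = (-1:ℝ) ^ ((k - 1) * (p ^ 2 - 1) / 8) * (legendreSym p k : ℝ) := by
  have hp3 : 3 ≤ p := by
    have := hp.out.two_le; rcases Nat.lt_or_ge p 3 with h | h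
    · interval_cases p <;> simp_all
    · exact h
  have hodd : p % 2 = 1 := Nat.odd_iff.mp (hp.out.odd_of_ne_two hp2)
  set s : Finset ℕ := Finset.Ico 1 (p/2+1) with hs
  set T : ℕ := ∑ x ∈ s, k * x / p with hT
  set S : ℕ := ∑ x ∈ s, x with hS
  set V : ℕ := ∑ x ∈ s, ((k : ZMod p) * x).val with hV
  set μ : ℕ := #(s.filter (fun x : ℕ => p / 2 < ((k : ZMod p) * (x : ZMod p)).val)) with hμ
  set E : ℕ := (k - 1) * (p ^ 2 - 1) / 8 with hE
  -- Gauss sum: 2 * S = (p/2) * (p/2 + 1)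
  have h1 : ∑ x ∈ Finset.range (p/2+1), x = S := by
    rw [Finset.range_eq_Ico, ← Finset.sum_Ico_consecutive _ (Nat.zero_le 1) (by omega)]
    simp [hS, hs]
  have h2S : S * 2 = (p/2+1) * (p/2) := by
    rw [← h1]
    simpa using Finset.sum_range_id_mul_two (p/2+1)
  have h8 : p ^ 2 - 1 = 8 * S := by
    obtain ⟨n, hn1, hn2⟩ : ∃ n, p = 2 * n + 1 ∧ n = p / 2 := ⟨p/2, by omega, rfl⟩
    have e1 : p ^ 2 = 4 * (S * 2) + 1 := by
      rw [h2S, ← hn2, hn1]; ring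
    generalize hP : p ^ 2 = P at e1 ⊢
    omega
  have hEeq : E = (k - 1) * S := by
    rw [hE, h8, show (k-1) * (8 * S) = 8 * ((k-1)*S) by ring]
    exact Nat.mul_div_cancel_left _ (by norm_num)
  -- the ℕ identity k * S = p * T + V
  have hkS : k * S = p * T + V := by
    rw [hS, hT, hV, Finset.mul_sum, Finset.mul_sum, ← Finset.sum_add_distrib]
    refine Finset.sum_congr rfl fun x hx => ?_
    have hval : ((k : ZMod p) * x).val = (k * x) % p := by
      rw [show ((k : ZMod p) * x) = ((k * x : ℕ) : ZMod p) by push_cast; ring, ZMod.val_natCast]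
    rw [hval]
    exact (Nat.div_add_mod (k*x) p).symm
  -- parity of V : V ≡ S + μ [MOD 2]
  have hVpar : (V : ZMod 2) = (S : ZMod 2) + (μ : ZMod 2) := by
    have hterm : ∀ x ∈ s, (((k : ZMod p) * x).val : ZMod 2)
        = ((((k : ZMod p) * x).valMinAbs.natAbs : ZMod 2))
          + (if p / 2 < ((k : ZMod p) * x).val then 1 else 0) := by
      intro x hx
      have hna := natAbs_valMinAbs_eq p ((k : ZMod p) * x)
      have hvlt : ((k : ZMod p) * x).val < p := ZMod.val_lt _
      rcases le_or_gt (((k : ZMod p) * x).val) (p/2) with h | h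
      · rw [if_neg (not_lt.mpr h), hna, if_pos h, add_zero]
      · rw [if_pos h, hna, if_neg (not_le.mpr h)]
        have : (((k : ZMod p) * x).val : ZMod 2) = ((p - ((k : ZMod p) * x).val + 1 : ℕ) : ZMod 2) := by
          rw [ZMod.natCast_eq_natCast_iff]
          unfold Nat.ModEq
          omega
        rw [this]
        push_cast
        ring
    rw [hV, Nat.cast_sum, Finset.sum_congr rfl hterm, Finset.sum_add_distrib]
    congr 1
    · rw [← Nat.cast_sum, perm_sum p k hk1 hk, hS, Nat.cast_sum]
    · rw [Finset.sum_boole, hμ]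
  -- conclude T ≡ E + μ [MOD 2]
  have hTpar : (T : ZMod 2) = ((E + μ : ℕ) : ZMod 2) := by
    have hcast : ((k * S : ℕ) : ZMod 2) = ((p * T + V : ℕ) : ZMod 2) := by rw [hkS]
    push_cast at hcast
    rw [hVpar] at hcast
    have hp1 : (p : ZMod 2) = 1 := by
      rw [show ((p : ℕ) : ZMod 2) = ((p % 2 : ℕ) : ZMod 2) by rw [ZMod.natCast_mod], hodd]
      norm_num
    rw [hp1, one_mul] at hcast
    push_cast [hEeq, Nat.cast_sub hk1]
    have hμ2 : (μ : ZMod 2) + (μ : ZMod 2) = 0 := by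
      rw [← two_mul, show (2 : ZMod 2) = 0 from rfl, zero_mul]
    linear_combination -hcast - hμ2
  rw [ZMod.natCast_eq_natCast_iff] at hTpar
  have hTmod : T % 2 = (E + μ) % 2 := hTpar
  -- Gauss' lemma
  have ha0 : ((k : ℤ) : ZMod p) ≠ 0 := by
    rw [Int.cast_natCast, Ne, ZMod.natCast_eq_zero_iff]
    intro h
    exact absurd (Nat.le_of_dvd (by omega) h) (by omega)
  have hgauss := ZMod.gauss_lemma (p := p) (a := (k : ℤ)) hp2 ha0
  have hμeq : #(Finset.filter (fun x : ℕ => p / 2 < ((((k : ℤ) : ZMod p)) * (x : ZMod p)).val) (Finset.Ico 1 (p / 2).succ)) = μ := by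
    rw [hμ, hs]
    congr 1
    ext x
    simp [Int.cast_natCast]
  rw [hμeq] at hgauss
  have hleg : (legendreSym p k : ℝ) = (-1 : ℝ) ^ μ := by
    rw [hgauss]; push_cast; ring
  rw [hleg]
  rw [← pow_add]
  rw [← Nat.mod_add_div T 2, ← Nat.mod_add_div (E + μ) 2, hTmod]
  rw [pow_add, pow_add, pow_mul, pow_mul]
  norm_num

/-- For an odd prime `p` and `1 ≤ k ≤ p−1`,
`∏_{j=1}^{(p−1)/2} sin(πjk/p) = (−1)^{(k−1)(p²−1)/8} · (k/p) · √p / 2^{(p−1)/2}`,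
where `(k/p)` is the Legendre symbol. -/
theorem prod_sin_eq_legendre (p : ℕ) [Fact p.Prime] (hp2 : p ≠ 2)
    (k : ℕ) (hk1 : 1 ≤ k) (hk : k ≤ p - 1) :
    ∏ j ∈ Finset.Icc 1 ((p - 1) / 2), Real.sin (Real.pi * j * k / p)
      = (-1 : ℝ) ^ ((k - 1) * (p ^ 2 - 1) / 8) * (legendreSym p k : ℝ) * Real.sqrt p
          / 2 ^ ((p - 1) / 2) := by
  have hodd : p % 2 = 1 := Nat.odd_iff.mp ((Fact.out (p := p.Prime)).odd_of_ne_two hp2)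
  have hhalf : (p - 1) / 2 = p / 2 := by omega
  rw [hhalf, ← Finset.Ico_add_one_right_eq_Icc]
  have hstep : ∀ j ∈ Finset.Ico 1 (p/2+1),
      Real.sin (Real.pi * j * k / p)
        = (-1:ℝ)^(k*j/p) * Real.sin (π * (((k : ZMod p) * j).valMinAbs.natAbs) / p) := by
    intro j hj
    simp only [Finset.mem_Ico] at hj
    exact term_eq p hp2 k hk1 hk j hj.1 (by omega)
  rw [Finset.prod_congr rfl hstep, Finset.prod_mul_distrib,
    Finset.prod_pow_eq_pow_sum, perm_prod p k hk1 hk (fun m => Real.sin (π * m / p)), base_prod p hp2,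
    sign_eq p hp2 k hk1 hk]
  ring
end

section
/- For n ≥ 1 and 0 ≤ k ≤ n, define the counting function N_k : ℚ → ℕ by N_k(c) = #{(m₁, …, mₙ) ∈ ℤⁿ : ∑_{j=1}^{k} (m_j + ½)² + ∑_{j=k+1}^{n} m_j² = c}. Then: (a) for any subset J ⊆ {1, …, n} with |J| = k and any c ∈ ℚ, #{m ∈ ℤⁿ : ∑_{j∈J} (m_j + ½)² + ∑_{j∉J} m_j² = c} = N_k(c); and (b) if 0 ≤ k < k′ ≤ n, then there exists c ∈ ℚ with N_k(c) ≠ N_{k′}(c). In other words, the counting function depends only on |J| and determines |J|. -/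
/-!
Relabelling the coordinates by a permutation of `Fin n` that carries `J` onto `{j | j < k}`
is a bijection between the two solution sets, so the count depends only on `|J|`.
For an integer `a` one has `(a + ½)² ≥ ¼`, so every point has squared norm at least `k/4`
when `k` coordinates are shifted, with equality at `m = 0`. Hence `N_k(k/4) > 0 = N_{k'}(k/4)`
for `k < k'`. Since `Nat.card` of an infinite type is `0`, positivity also needs the shells to be
finite, which holds because every coordinate of a point of norm `c` satisfies `|m_j| ≤ c + 1`.
-/

noncomputable def latticeShellCount (n k : ℕ) (c : ℚ) : ℕ :=
  Nat.card {m : Fin n → ℤ //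
    (∑ j : Fin n, if (j : ℕ) < k then ((m j : ℚ) + 1 / 2) ^ 2 else ((m j : ℚ)) ^ 2) = c}

lemma Fin.card_subtype_val_lt (n l : ℕ) : Fintype.card {j : Fin n // (j : ℕ) < l} = min n l := by
  rw [Fintype.card_subtype, Fin.card_filter_val_lt]

lemma Equiv.Perm.exists_apply_iff_of_card_eq {ι : Type*} [Fintype ι] {p q : ι → Prop}
    [DecidablePred p] [DecidablePred q]
    (h : Fintype.card {i // p i} = Fintype.card {i // q i}) :
    ∃ σ : Equiv.Perm ι, ∀ i, q (σ i) ↔ p i := by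
  have hc : Fintype.card {i // ¬p i} = Fintype.card {i // ¬q i} := by
    rw [Fintype.card_subtype_compl, Fintype.card_subtype_compl, h]
  refine ⟨Equiv.subtypeCongr (Fintype.equivOfCardEq h) (Fintype.equivOfCardEq hc), fun i => ?_⟩
  by_cases hi : p i
  · simpa [Equiv.subtypeCongr, hi] using (Fintype.equivOfCardEq h ⟨i, hi⟩).2
  · simpa [Equiv.subtypeCongr, hi] using (Fintype.equivOfCardEq hc ⟨i, hi⟩).2

lemma Int.abs_sub_one_le_sq_add_half (a : ℤ) : (|a| : ℚ) - 1 ≤ ((a : ℚ) + 1 / 2) ^ 2 := by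
  rcases abs_cases (a : ℚ) with ⟨h, _⟩ | ⟨h, _⟩ <;> nlinarith

lemma Int.quarter_le_sq_add_half (a : ℤ) : (1 / 4 : ℚ) ≤ ((a : ℚ) + 1 / 2) ^ 2 := by
  have h : 0 ≤ a * (a + 1) := by rcases le_or_gt 0 a with h | h <;> nlinarith
  have h' : (0 : ℚ) ≤ a * (a + 1) := by exact_mod_cast h
  nlinarith

section ShiftedNormSq

variable {ι : Type*} [Fintype ι] (p : ι → Prop) [DecidablePred p]

def shiftedNormSq (m : ι → ℤ) : ℚ :=
  ∑ i, if p i then ((m i : ℚ) + 1 / 2) ^ 2 else (m i : ℚ) ^ 2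

lemma shiftedNormSq_comp_perm {q : ι → Prop} [DecidablePred q] (σ : Equiv.Perm ι)
    (hσ : ∀ i, q (σ i) ↔ p i) (m : ι → ℤ) :
    shiftedNormSq q (m ∘ σ.symm) = shiftedNormSq p m := by
  rw [shiftedNormSq, ← Equiv.sum_comp σ]
  simp [shiftedNormSq, hσ]

lemma natCard_shiftedNormSq_eq_congr {q : ι → Prop} [DecidablePred q]
    (h : Fintype.card {i // p i} = Fintype.card {i // q i}) (c : ℚ) :
    Nat.card {m // shiftedNormSq p m = c} = Nat.card {m // shiftedNormSq q m = c} := by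
  obtain ⟨σ, hσ⟩ := Equiv.Perm.exists_apply_iff_of_card_eq h
  exact Nat.card_congr <| (σ.arrowCongr (Equiv.refl ℤ)).subtypeEquiv fun m => by
    rw [← shiftedNormSq_comp_perm p σ hσ m]
    rfl

lemma abs_le_shiftedNormSq_add_one (m : ι → ℤ) (i : ι) :
    (|m i| : ℚ) ≤ shiftedNormSq p m + 1 := by
  calc (|m i| : ℚ) ≤ (if p i then ((m i : ℚ) + 1 / 2) ^ 2 else (m i : ℚ) ^ 2) + 1 := by
        split_ifs
        · linarith [(m i).abs_sub_one_le_sq_add_half]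
        · nlinarith [abs_mul_abs_self (m i : ℚ), abs_nonneg (m i : ℚ)]
    _ ≤ shiftedNormSq p m + 1 := by
        unfold shiftedNormSq
        gcongr
        refine Finset.single_le_sum (N := ℚ) (fun j _ => ?_) (Finset.mem_univ i)
        positivity

lemma finite_shiftedNormSq_eq (c : ℚ) : Finite {m // shiftedNormSq p m = c} := by
  refine ((Set.Finite.pi' fun _ => Set.finite_Icc (-⌈c + 1⌉) ⌈c + 1⌉).subset
    fun m (hm : shiftedNormSq p m = c) i => abs_le.mp ?_).to_subtype
  exact_mod_cast ((abs_le_shiftedNormSq_add_one p m i).trans_eq (by rw [hm])).trans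
    (Int.le_ceil _)

lemma card_div_four_le_shiftedNormSq (m : ι → ℤ) :
    (Fintype.card {i // p i} : ℚ) / 4 ≤ shiftedNormSq p m := by
  calc (Fintype.card {i // p i} : ℚ) / 4 = ∑ i, if p i then (1 / 4 : ℚ) else 0 := by
        simp [Finset.sum_ite, Fintype.card_subtype, div_eq_mul_inv]
    _ ≤ shiftedNormSq p m := Finset.sum_le_sum fun i _ => by
        split_ifs
        · exact (m i).quarter_le_sq_add_half
        · positivity

lemma shiftedNormSq_zero : shiftedNormSq p 0 = Fintype.card {i // p i} / 4 := by
  simp [shiftedNormSq, Finset.sum_ite, Fintype.card_subtype, div_eq_mul_inv]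
  norm_num

lemma natCard_shiftedNormSq_eq_zero_of_lt {c : ℚ} (hc : c < Fintype.card {i // p i} / 4) :
    Nat.card {m // shiftedNormSq p m = c} = 0 :=
  have : IsEmpty {m // shiftedNormSq p m = c} :=
    ⟨fun ⟨m, hm⟩ => (card_div_four_le_shiftedNormSq p m).not_gt (hm ▸ hc)⟩
  Nat.card_of_isEmpty

lemma natCard_shiftedNormSq_card_div_four_ne_zero :
    Nat.card {m // shiftedNormSq p m = Fintype.card {i // p i} / 4} ≠ 0 :=
  have := finite_shiftedNormSq_eq p
  Nat.card_ne_zero.mpr ⟨⟨⟨0, shiftedNormSq_zero p⟩⟩, inferInstance⟩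

end ShiftedNormSq

theorem latticeShellCount_eq_and_injective_general (n : ℕ) (k : ℕ) (hk : k ≤ n) :
    (∀ J : Finset (Fin n), J.card = k → ∀ c : ℚ,
      Nat.card {m : Fin n → ℤ //
          (∑ j : Fin n, if j ∈ J then ((m j : ℚ) + 1 / 2) ^ 2 else ((m j : ℚ)) ^ 2) = c}
        = latticeShellCount n k c) ∧
    (∀ k' : ℕ, k < k' → k' ≤ n → ∃ c : ℚ, latticeShellCount n k c ≠ latticeShellCount n k' c) := by
  refine ⟨fun J hJ c => ?_, fun k' hkk' hk' => ⟨k / 4, ?_⟩⟩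
  · refine natCard_shiftedNormSq_eq_congr (· ∈ J) (q := fun j : Fin n => (j : ℕ) < k) ?_ c
    rw [Fin.card_subtype_val_lt, min_eq_right hk, Fintype.card_coe, hJ]
  · have hpos := natCard_shiftedNormSq_card_div_four_ne_zero (fun j : Fin n => (j : ℕ) < k)
    have hzero := natCard_shiftedNormSq_eq_zero_of_lt (fun j : Fin n => (j : ℕ) < k')
      (c := k / 4) (by rw [Fin.card_subtype_val_lt, min_eq_right hk']; gcongr)
    rw [Fin.card_subtype_val_lt, min_eq_right hk] at hpos
    unfold latticeShellCount
    exact hzero ▸ hpos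

/-- (a) For any `J ⊆ {1,…,n}` with `|J| = k` and any `c ∈ ℚ`, the number of
`m ∈ ℤⁿ` with `∑_{j∈J} (m_j + ½)² + ∑_{j∉J} m_j² = c` equals `N_k(c)`; and (b) if
`k < k′ ≤ n` then `N_k` and `N_{k′}` differ at some `c`: the counting function depends
only on `|J|` and determines `|J|`. -/
theorem latticeShellCount_eq_and_injective (n : ℕ) (hn : 1 ≤ n) (k : ℕ) (hk : k ≤ n) :
    (∀ J : Finset (Fin n), J.card = k → ∀ c : ℚ,
      Nat.card {m : Fin n → ℤ //
          (∑ j : Fin n, if j ∈ J then ((m j : ℚ) + 1 / 2) ^ 2 else ((m j : ℚ)) ^ 2) = c}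
        = latticeShellCount n k c) ∧
    (∀ k' : ℕ, k < k' → k' ≤ n → ∃ c : ℚ, latticeShellCount n k c ≠ latticeShellCount n k' c) :=
  latticeShellCount_eq_and_injective_general n k hk
end
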